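/- For the time-invariant skew-adjusted system: if A(t) = Ā − blkdiag([ω]×, [ω]×, [ω]×) where R(t) solves Ṙ = R[ω]× on SO(3), then the state transition matrix of A(t) factors as Φ(t,s) = R̄(t)ᵀ exp(Ā(t−s)) R̄(s), where R̄(t) = blkdiag(R(t), R(t), R(t)). -/

import Mathlib

open Matrix

noncomputable section

/-- The 9×9 nilpotent shift block matrix `Ā = [[0,I₃,0],[0,0,I₃],[0,0,0]]`. -/
def Abar : Matrix (Fin 9) (Fin 9) ℝ :=
  Matrix.of fun i j => if i.val + 3 = j.val then 1 else 0

/-- The 9×9 matrix `C = [[I₃,0,0],[0,0,0],[0,0,0]]` selecting the first block. -/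
def Cmat : Matrix (Fin 9) (Fin 9) ℝ :=
  Matrix.of fun i j => if i = j ∧ i.val < 3 then 1 else 0

/-- Block diagonal matrix `blkdiag(S,S,S)`. -/
def blkdiag3 (S : Matrix (Fin 3) (Fin 3) ℝ) : Matrix (Fin 9) (Fin 9) ℝ :=
  Matrix.of fun i j =>
    if i.val / 3 = j.val / 3 then
      S ⟨i.val % 3, Nat.mod_lt _ (by norm_num)⟩ ⟨j.val % 3, Nat.mod_lt _ (by norm_num)⟩
    else 0

/-- The skew-symmetric matrix `[x]×` with `[x]× y = x × y`. -/
def skew (x : Fin 3 → ℝ) : Matrix (Fin 3) (Fin 3) ℝ :=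
  !![0, -x 2, x 1; x 2, 0, -x 0; -x 1, x 0, 0]

/-- Embedding of `z₁ ∈ ℝ³` as `(z₁,0,0) ∈ ℝ⁹`. -/
def embed9 (z : Fin 3 → ℝ) : Fin 9 → ℝ :=
  fun i => if h : i.val < 3 then z ⟨i.val, h⟩ else 0

/-- Euclidean norm on `ℝ^m`. -/
def eucNorm {m : ℕ} (v : Fin m → ℝ) : ℝ := Real.sqrt (∑ i, v i ^ 2)

/-!
Conjugating by `R̄(t) = blkdiag(R(t), R(t), R(t))` removes the rotational part of `A`: since
`R̄' = R̄ · blkdiag([ω]×, [ω]×, [ω]×)` and `R̄` commutes with `Ā`, the product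
`M(τ) = R̄(τ) Φ(τ, s)` solves the constant-coefficient equation `M' = Ā M` with `M(s) = R̄(s)`.
Hence `M(t) = exp((t - s) Ā) R̄(s)`, and `R̄(t)ᵀ R̄(t) = 1` gives the factorization.
-/

open Kronecker

-- Any normed-algebra structure on matrices would do: all induce the product topology, which is
-- the one `NormedSpace.exp` and `HasDerivAt` see in the statement.
attribute [local instance] Matrix.linftyOpNormedAddCommGroup Matrix.linftyOpNormedSpace
  Matrix.linftyOpNormedRing Matrix.linftyOpNormedAlgebra

section BlockStructure

/-- The nilpotent upper shift on `ℝ³`, so that `Ā = shift3 ⊗ I₃`. -/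
def shift3 : Matrix (Fin 3) (Fin 3) ℝ :=
  Matrix.of fun p q => if p.val + 1 = q.val then 1 else 0

lemma blkdiag3_eq_kronecker (S : Matrix (Fin 3) (Fin 3) ℝ) :
    blkdiag3 S = ((1 : Matrix (Fin 3) (Fin 3) ℝ) ⊗ₖ S).submatrix
      finProdFinEquiv.symm finProdFinEquiv.symm := by
  ext i j
  simp only [blkdiag3, Matrix.of_apply, Matrix.submatrix_apply, Matrix.kroneckerMap_apply,
    Matrix.one_apply, finProdFinEquiv_symm_apply, Fin.ext_iff, Fin.coe_divNat]
  split_ifs <;> simp [Fin.modNat]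

lemma Abar_eq_kronecker :
    Abar = (shift3 ⊗ₖ (1 : Matrix (Fin 3) (Fin 3) ℝ)).submatrix
      finProdFinEquiv.symm finProdFinEquiv.symm := by
  ext i j
  simp only [Abar, shift3, Matrix.of_apply, Matrix.submatrix_apply, Matrix.kroneckerMap_apply,
    Matrix.one_apply, finProdFinEquiv_symm_apply, Fin.ext_iff, Fin.coe_divNat, Fin.coe_modNat]
  have := i.isLt
  have := j.isLt
  split_ifs <;> simp_all <;> omega

lemma blkdiag3_mul (S T : Matrix (Fin 3) (Fin 3) ℝ) :
    blkdiag3 S * blkdiag3 T = blkdiag3 (S * T) := by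
  rw [blkdiag3_eq_kronecker, blkdiag3_eq_kronecker, blkdiag3_eq_kronecker,
    Matrix.submatrix_mul_equiv, ← Matrix.mul_kronecker_mul, one_mul]

lemma blkdiag3_transpose (S : Matrix (Fin 3) (Fin 3) ℝ) :
    (blkdiag3 S)ᵀ = blkdiag3 Sᵀ := by
  rw [blkdiag3_eq_kronecker, blkdiag3_eq_kronecker, Matrix.transpose_submatrix,
    ← Matrix.kroneckerMap_transpose, Matrix.transpose_one]

lemma blkdiag3_transpose_mul_self {S : Matrix (Fin 3) (Fin 3) ℝ} (hS : Sᵀ * S = 1) :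
    (blkdiag3 S)ᵀ * blkdiag3 S = 1 := by
  rw [blkdiag3_transpose, blkdiag3_mul, hS, blkdiag3_eq_kronecker, Matrix.one_kronecker_one,
    Matrix.submatrix_one_equiv]

lemma commute_blkdiag3_Abar (S : Matrix (Fin 3) (Fin 3) ℝ) : Commute (blkdiag3 S) Abar := by
  rw [Commute, SemiconjBy, blkdiag3_eq_kronecker, Abar_eq_kronecker, Matrix.submatrix_mul_equiv,
    Matrix.submatrix_mul_equiv, ← Matrix.mul_kronecker_mul, ← Matrix.mul_kronecker_mul,
    one_mul, mul_one, one_mul, mul_one]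

end BlockStructure

section Derivatives

lemma hasDerivAt_matrix_of_entries {m n : Type*} [Fintype m] [Fintype n]
    {f : ℝ → Matrix m n ℝ} {f' : Matrix m n ℝ} {t : ℝ}
    (h : ∀ i j, HasDerivAt (fun τ => f τ i j) (f' i j) t) : HasDerivAt f f' t := by
  refine hasDerivAt_iff_tendsto_slope.mpr
    (tendsto_pi_nhds.mpr fun i => tendsto_pi_nhds.mpr fun j => ?_)
  simpa only [slope_fun_def, Matrix.smul_apply, Matrix.sub_apply, vsub_eq_sub] using
    hasDerivAt_iff_tendsto_slope.mp (h i j)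

lemma hasDerivAt_blkdiag3 {R : ℝ → Matrix (Fin 3) (Fin 3) ℝ} {R' : Matrix (Fin 3) (Fin 3) ℝ}
    {t : ℝ} (h : ∀ i j, HasDerivAt (fun τ => R τ i j) (R' i j) t) :
    HasDerivAt (fun τ => blkdiag3 (R τ)) (blkdiag3 R') t :=
  hasDerivAt_matrix_of_entries fun i j => by
    by_cases hij : i.val / 3 = j.val / 3
    · simpa [blkdiag3, hij] using h _ _
    · simpa [blkdiag3, hij] using hasDerivAt_const t (0 : ℝ)

variable {𝔸 : Type*} [NormedRing 𝔸] [NormedAlgebra ℝ 𝔸]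

lemma HasDerivAt.mul_of_commute_sub {P Q : ℝ → 𝔸} {a w : 𝔸} {t : ℝ}
    (hP : HasDerivAt P (P t * w) t) (hQ : HasDerivAt Q ((a - w) * Q t) t)
    (hPa : Commute (P t) a) :
    HasDerivAt (fun τ => P τ * Q τ) (a * (P t * Q t)) t := by
  refine (hP.mul hQ).congr_deriv ?_
  rw [← mul_assoc (P t) (a - w), mul_sub, hPa.eq]
  noncomm_ring

variable [CompleteSpace 𝔸]

lemma exp_smul_mul_exp_neg_smul (a : 𝔸) (x : ℝ) :
    NormedSpace.exp (x • a) * NormedSpace.exp ((-x) • a) = 1 := by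
  have hr := NormedSpace.expSeries_radius_eq_top ℝ 𝔸
  rw [← NormedSpace.exp_add_of_commute_of_mem_ball (𝕂 := ℝ)
      (((Commute.refl a).smul_left x).smul_right (-x))
      (hr.symm ▸ edist_lt_top _ _) (hr.symm ▸ edist_lt_top _ _),
    ← add_smul, add_neg_cancel, zero_smul, NormedSpace.exp_zero]

lemma hasDerivAt_exp_smul_const_sub (a : 𝔸) (s t : ℝ) :
    HasDerivAt (fun τ => NormedSpace.exp ((s - τ) • a))
      (-(NormedSpace.exp ((s - t) • a) * a)) t := by
  have h := (hasDerivAt_exp_smul_const a (s - t)).scomp t ((hasDerivAt_id t).const_sub s)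
  rwa [neg_one_smul] at h

lemma eq_exp_smul_mul_of_hasDerivAt {M : ℝ → 𝔸} {a : 𝔸}
    (hM : ∀ τ, HasDerivAt M (a * M τ) τ) (t s : ℝ) :
    M t = NormedSpace.exp ((t - s) • a) * M s := by
  have hconst : ∀ τ, HasDerivAt (fun τ => NormedSpace.exp ((s - τ) • a) * M τ) 0 τ := by
    intro τ
    refine ((hasDerivAt_exp_smul_const_sub a s τ).mul (hM τ)).congr_deriv ?_
    rw [neg_mul, mul_assoc, neg_add_cancel]
  have hts := is_const_of_deriv_eq_zero (fun τ => (hconst τ).differentiableAt)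
    (fun τ => (hconst τ).deriv) t s
  simp only [sub_self, zero_smul, NormedSpace.exp_zero, one_mul] at hts
  have hinv := exp_smul_mul_exp_neg_smul a (t - s)
  rw [neg_sub] at hinv
  rw [← hts, ← mul_assoc, hinv, one_mul]

end Derivatives

theorem transition_factorization_general (ω : ℝ → Fin 3 → ℝ)
    (R : ℝ → Matrix (Fin 3) (Fin 3) ℝ)
    (hSO : ∀ t, (R t)ᵀ * R t = 1 ∧ (R t).det = 1)
    (hR : ∀ t i j, HasDerivAt (fun τ => R τ i j) ((R t * skew (ω t)) i j) t)
    (A : ℝ → Matrix (Fin 9) (Fin 9) ℝ)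
    (hA : ∀ t, A t = Abar - blkdiag3 (skew (ω t)))
    (Φ : ℝ → ℝ → Matrix (Fin 9) (Fin 9) ℝ)
    (hΦ0 : ∀ s, Φ s s = 1)
    (hΦ : ∀ s t i j, HasDerivAt (fun τ => Φ τ s i j) ((A t * Φ t s) i j) t) :
    ∀ t s, Φ t s = (blkdiag3 (R t))ᵀ * NormedSpace.exp ((t - s) • Abar) * blkdiag3 (R s) := by
  intro t s
  have hRbar : ∀ τ, HasDerivAt (fun τ => blkdiag3 (R τ))
      (blkdiag3 (R τ) * blkdiag3 (skew (ω τ))) τ := fun τ => by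
    rw [blkdiag3_mul]
    exact hasDerivAt_blkdiag3 (hR τ)
  have hΦs : ∀ τ, HasDerivAt (fun τ => Φ τ s)
      ((Abar - blkdiag3 (skew (ω τ))) * Φ τ s) τ := fun τ => by
    rw [← hA τ]
    exact hasDerivAt_matrix_of_entries (hΦ s τ)
  have hconj : blkdiag3 (R t) * Φ t s = NormedSpace.exp ((t - s) • Abar) * blkdiag3 (R s) := by
    have h := eq_exp_smul_mul_of_hasDerivAt
      (fun τ => (hRbar τ).mul_of_commute_sub (hΦs τ) (commute_blkdiag3_Abar (R τ))) t s
    rwa [hΦ0, mul_one] at h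
  rw [mul_assoc, ← hconj, ← mul_assoc, blkdiag3_transpose_mul_self (hSO t).1, one_mul]

/-- the state transition matrix of `A(t) = Ā − blkdiag([ω]×,[ω]×,[ω]×)`
factors as `Φ(t,s) = R̄(t)ᵀ exp(Ā(t−s)) R̄(s)` where `R̄ = blkdiag(R,R,R)` and
`Ṙ = R[ω]×` on `SO(3)`. -/
theorem transition_factorization (ω : ℝ → Fin 3 → ℝ)
    (hω : ∀ i, Continuous fun t => ω t i)
    (R : ℝ → Matrix (Fin 3) (Fin 3) ℝ)
    (hSO : ∀ t, (R t)ᵀ * R t = 1 ∧ (R t).det = 1)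
    (hR : ∀ t i j, HasDerivAt (fun τ => R τ i j) ((R t * skew (ω t)) i j) t)
    (A : ℝ → Matrix (Fin 9) (Fin 9) ℝ)
    (hA : ∀ t, A t = Abar - blkdiag3 (skew (ω t)))
    (Φ : ℝ → ℝ → Matrix (Fin 9) (Fin 9) ℝ)
    (hΦ0 : ∀ s, Φ s s = 1)
    (hΦ : ∀ s t i j, HasDerivAt (fun τ => Φ τ s i j) ((A t * Φ t s) i j) t) :
    ∀ t s, Φ t s = (blkdiag3 (R t))ᵀ * NormedSpace.exp ((t - s) • Abar) * blkdiag3 (R s) :=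
  transition_factorization_general ω R hSO hR A hA Φ hΦ0 hΦ
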